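/- arXiv:2406.06994 — 8 statements merged into one kernel-verified Lean document; each statement's English description precedes it below -/
import Mathlib

section
/- Let (W, ≤) be a well ordered set, and let ⊑ be the product order on ℕ₀ⁿ × {1,…,k} × W. Then there is no infinite strictly ascending chain D₁ ⊂ D₂ ⊂ ⋯ of upward closed subsets of ℕ₀ⁿ × {1,…,k} × W with respect to set inclusion. -/
/-- The order `⊑` on `ℕ₀ⁿ × {1,…,k} × W`: componentwise on exponents, equality on the
position, and `≤` on `W`. -/
def SqLe {n k : ℕ} {W : Type*} [LinearOrder W]
    (d e : ((Fin n → ℕ) × Fin k) × W) : Prop :=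
  (∀ m, d.1.1 m ≤ e.1.1 m) ∧ d.1.2 = e.1.2 ∧ d.2 ≤ e.2

/-! A sequence of witnesses `x i ∈ D (i + 1) \ D i` of a strictly ascending chain of upward
closed sets has no pair `i < j` with `x i ⊑ x j`: upward closure would put `x j` into
`D (i + 1) ⊆ D j`. So it suffices that `⊑` is a well quasi-order, which is Dickson's lemma
combined with the finiteness of the positions and the well-ordering of `W`. -/

theorem WellQuasiOrdered.not_strictMono_of_upClosed {α : Type*} {r : α → α → Prop}
    (hr : WellQuasiOrdered r) {D : ℕ → Set α} (hD : ∀ i, ∀ s ∈ D i, ∀ t, r s t → t ∈ D i) :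
    ¬ StrictMono D := by
  intro hmono
  choose x hx using fun i => Set.exists_of_ssubset (hmono (Nat.lt_succ_self i))
  obtain ⟨i, j, hij, hrel⟩ := hr x
  exact (hx j).2 (hD j _ (hmono.monotone hij (hx i).1) _ hrel)

theorem wellQuasiOrdered_sqLe {n k : ℕ} {W : Type*} [LinearOrder W] [WellFoundedLT W] :
    WellQuasiOrdered (SqLe (n := n) (k := k) (W := W)) := by
  intro f
  obtain ⟨g, hexp⟩ := wellQuasiOrdered_le.exists_monotone_subseq fun i => (f i).1.1
  obtain ⟨i, j, hij, hpos, hw⟩ := (Finite.wellQuasiOrdered (· = ·)).prod wellQuasiOrdered_le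
    fun i => ((f (g i)).1.2, (f (g i)).2)
  exact ⟨g i, g j, g.strictMono hij, hexp i j hij.le, hpos, hw⟩

/-- For a well ordered set `W`, there is no infinite strictly
ascending chain of upward closed subsets of `(ℕ₀ⁿ × {1,…,k} × W, ⊑)`. -/
theorem sqle_no_ascending_chain_of_upward_closed
    {n k : ℕ} {W : Type*} [LinearOrder W] [WellFoundedLT W] :
    ¬ ∃ D : ℕ → Set (((Fin n → ℕ) × Fin k) × W),
      (∀ i, ∀ s ∈ D i, ∀ t, SqLe s t → t ∈ D i) ∧
      (∀ i, D i ⊂ D (i + 1)) := by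
  rintro ⟨D, hup, hchain⟩
  exact wellQuasiOrdered_sqLe.not_strictMono_of_upClosed hup (strictMono_nat_of_lt_succ hchain)
end

section
/- Every submodule I of R[x₁,…,x_n]^k, where R is a Euclidean domain, has a finite strong Gröbner basis with respect to any given admissible order on the monomial vectors. -/
open MvPolynomial

/-- Polynomial vectors: `R[x₁,…,x_n]^k`. -/
abbrev PolyVec (R : Type*) [CommSemiring R] (n k : ℕ) := Fin k → MvPolynomial (Fin n) R

/-- Monomial vectors `x^α e_i`, encoded as pairs `(α, i)`. -/
abbrev MonV (n k : ℕ) := (Fin n →₀ ℕ) × Fin k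

/-- An admissible order on monomial vectors. -/
structure AdmissibleOrder (n k : ℕ) where
  le : MonV n k → MonV n k → Prop
  refl : ∀ a, le a a
  trans : ∀ a b c, le a b → le b c → le a c
  antisymm : ∀ a b, le a b → le b a → a = b
  total : ∀ a b, le a b ∨ le b a
  dvd_le : ∀ (α β : Fin n →₀ ℕ) (i : Fin k), (∀ m, α m ≤ β m) → le (α, i) (β, i)
  add_le : ∀ (α β γ : Fin n →₀ ℕ) (i j : Fin k),
    le (α, i) (β, j) → le (α + γ, i) (β + γ, j)

variable {R : Type*} [CommRing R] {n k : ℕ}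

/-- `m` is the leading monomial vector of `f` w.r.t. the admissible order `r`
(so in particular `f ≠ 0`). -/
def IsDeg (r : AdmissibleOrder n k) (f : PolyVec R n k) (m : MonV n k) : Prop :=
  (f m.2).coeff m.1 ≠ 0 ∧ ∀ m' : MonV n k, (f m'.2).coeff m'.1 ≠ 0 → r.le m' m

/-- The leading term vector of `g` divides the leading term vector of `f`:
same position, componentwise smaller exponent, and the leading coefficient of `g`
divides that of `f` in `R`. -/
def LtDvd (r : AdmissibleOrder n k) (g f : PolyVec R n k) : Prop :=
  ∃ mg mf : MonV n k, IsDeg r g mg ∧ IsDeg r f mf ∧ mg.2 = mf.2 ∧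
    (∀ m, mg.1 m ≤ mf.1 m) ∧ (g mg.2).coeff mg.1 ∣ (f mf.2).coeff mf.1

/-- `G` is a strong Gröbner basis of the submodule `I` w.r.t. `r`. -/
def IsSGB (r : AdmissibleOrder n k) (G : Set (PolyVec R n k))
    (I : Submodule (MvPolynomial (Fin n) R) (PolyVec R n k)) : Prop :=
  (∀ g ∈ G, g ∈ I ∧ g ≠ 0) ∧
  ∀ f ∈ I, f ≠ 0 → ∃ g ∈ G, LtDvd r g f

/-- Multiplication of a polynomial vector by the term `a·x^m`. -/
noncomputable def termSMul (m : Fin n →₀ ℕ) (a : R) (g : PolyVec R n k) : PolyVec R n k :=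
  fun j => MvPolynomial.monomial m a * g j

/-- `f` has a strong standard representation by `G`: `f = Σ aᵢ mᵢ gᵢ` with `gᵢ ∈ G`,
`Lm(m₁g₁) = Lm(f)` and `Lm(mᵢgᵢ) < Lm(f)` for `i ≥ 2`. -/
def IsSSR (r : AdmissibleOrder n k) (G : Set (PolyVec R n k)) (f : PolyVec R n k) : Prop :=
  ∃ (N : ℕ) (hN : 0 < N) (a : Fin N → R) (m : Fin N → (Fin n →₀ ℕ))
    (g : Fin N → PolyVec R n k),
    (∀ i, g i ∈ G) ∧
    f = ∑ i, termSMul (m i) (a i) (g i) ∧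
    ∃ mf m0 : MonV n k, IsDeg r f mf ∧ IsDeg r (g ⟨0, hN⟩) m0 ∧
      ((m ⟨0, hN⟩ + m0.1, m0.2) : MonV n k) = mf ∧
      ∀ i : Fin N, i ≠ ⟨0, hN⟩ → ∃ mi : MonV n k, IsDeg r (g i) mi ∧
        r.le (m i + mi.1, mi.2) mf ∧ ((m i + mi.1, mi.2) : MonV n k) ≠ mf

/-- `h` is an `S`-polynomial vector of the ordered pair `(f, g)` w.r.t. the
Euclidean grading `δ`. -/
def IsSPolyPair {W : Type*} [LinearOrder W] (δ : R → W) (r : AdmissibleOrder n k)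
    (f g h : PolyVec R n k) : Prop :=
  ∃ mf mg : MonV n k, IsDeg r f mf ∧ IsDeg r g mg ∧
    ((mf.2 ≠ mg.2 ∧ h = 0) ∨
     (mf.2 = mg.2 ∧ δ ((g mg.2).coeff mg.1) ≤ δ ((f mf.2).coeff mf.1) ∧
       ∃ q : R,
         δ ((f mf.2).coeff mf.1 - q * (g mg.2).coeff mg.1) < δ ((f mf.2).coeff mf.1) ∧
         h = termSMul ((mf.1 ⊔ mg.1) - mg.1) 1 f - termSMul ((mf.1 ⊔ mg.1) - mf.1) q g))

/-- `h` is an `S`-polynomial vector of the (unordered) set `{f, g}`. -/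
def IsSPolySet {W : Type*} [LinearOrder W] (δ : R → W) (r : AdmissibleOrder n k)
    (f g h : PolyVec R n k) : Prop :=
  IsSPolyPair δ r f g h ∨ IsSPolyPair δ r g f h

/-! The leading coefficients of the elements of `I` with leading monomial vector `x^β e_i`,
together with `0`, form an ideal `J(β, i)` of `R`, and `J(β, i) ≤ J(β', i)` whenever `β ≤ β'`.
The grading `δ` makes `R` a Euclidean domain, hence a principal ideal ring, so `J(β, i)` is
generated by the leading coefficient of a single element of `I`. By Dickson's lemma and the
ascending chain condition on ideals, finitely many exponents `d` suffice for each position `i`: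
every leading monomial vector `x^β e_i` of `I` lies above one of them with `J(β, i) = J(d, i)`. -/

theorem IsPrincipalIdealRing.of_euclidean_grading {R W : Type*} [CommRing R] [Nontrivial R]
    [LinearOrder W] [WellFoundedLT W] (δ : R → W)
    (hmul : ∀ a b : R, a ≠ 0 → δ b ≤ δ (a * b))
    (hdiv : ∀ a b : R, a ≠ 0 → ∃ q s : R, b = q * a + s ∧ δ s < δ a) :
    IsPrincipalIdealRing R := by
  classical
  choose quot rem hquot hrem using hdiv
  let _ : EuclideanDomain R :=
    { ‹CommRing R›, ‹Nontrivial R› with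
      quotient := fun b a => if ha : a = 0 then 0 else quot a b ha
      quotient_zero := fun _ => dif_pos rfl
      remainder := fun b a => b - a * if ha : a = 0 then 0 else quot a b ha
      quotient_mul_add_remainder_eq := fun _ _ => add_sub_cancel _ _
      r := fun a b => δ a < δ b
      r_wellFounded := InvImage.wf δ wellFounded_lt
      remainder_lt := fun b a ha => by
        show δ (b - a * dite _ _ _) < δ a
        rw [dif_neg ha, show b - a * quot a b ha = rem a b ha by linear_combination hquot a b ha]
        exact hrem a b ha
      mul_left_not_lt := fun a b hb => not_lt.2 (mul_comm a b ▸ hmul b a hb) }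
  exact EuclideanDomain.to_principal_ideal_domain

theorem Monotone.exists_finset_basis {P α : Type*} [PartialOrder P] [WellQuasiOrderedLE P]
    [PartialOrder α] [WellFoundedGT α] {J : P → α} (hJ : Monotone J) (S : Set P) :
    ∃ D : Finset P, ↑D ⊆ S ∧ ∀ m ∈ S, ∃ d ∈ D, d ≤ m ∧ J m ≤ J d := by
  classical
  -- The graph `T` of `J` in `P × αᵒᵈ` is partially well ordered: along a monotone subsequence
  -- in `P` the chain of values of `J` stabilizes. Its minimal elements form a finite antichain.
  set T : Set (P × αᵒᵈ) := (fun m => (m, OrderDual.toDual (J m))) '' S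
  have hT : T.IsPWO := by
    refine Set.partiallyWellOrderedOn_iff_exists_lt.2 fun f hf => ?_
    choose g hgS hg using hf
    obtain ⟨φ, hφ⟩ := wellQuasiOrdered_le.exists_monotone_subseq g
    obtain ⟨N, hN⟩ := WellFoundedGT.monotone_chain_condition
      ⟨fun j => J (g (φ j)), fun _ _ h => hJ (hφ _ _ h)⟩
    refine ⟨φ N, φ (N + 1), φ.strictMono N.lt_succ_self, ?_⟩
    rw [← hg, ← hg]
    exact ⟨hφ _ _ N.le_succ, (hN (N + 1) N.le_succ).ge⟩
  have hmin : {x | Minimal (· ∈ T) x}.Finite :=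
    (setOfPred_minimal_antichain _).finite_of_partiallyWellOrderedOn (hT.mono fun x hx => hx.1)
  refine ⟨hmin.toFinset.image Prod.fst, ?_, fun m hm => ?_⟩
  · intro d hd
    obtain ⟨x, hx, rfl⟩ := Finset.mem_image.1 hd
    obtain ⟨m, hm, rfl⟩ := (hmin.mem_toFinset.1 hx).1
    exact hm
  · obtain ⟨x, hxm, hx⟩ := hT.exists_le_minimal (Set.mem_image_of_mem _ hm)
    obtain ⟨d, -, rfl⟩ := hx.1
    exact ⟨d, Finset.mem_image.2 ⟨_, hmin.mem_toFinset.2 hx, rfl⟩, hxm.1, hxm.2⟩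

theorem AdmissibleOrder.exists_max (r : AdmissibleOrder n k) {s : Finset (MonV n k)}
    (hs : s.Nonempty) : ∃ m ∈ s, ∀ m' ∈ s, r.le m' m := by
  induction hs using Finset.Nonempty.cons_induction with
  | singleton a =>
    exact ⟨a, Finset.mem_singleton_self a, fun b hb => Finset.mem_singleton.1 hb ▸ r.refl a⟩
  | cons a s ha hs ih =>
    obtain ⟨m, hm, hmax⟩ := ih
    rcases r.total a m with ham | hma
    · exact ⟨m, Finset.mem_cons_of_mem hm, (Finset.forall_mem_cons _ _).2 ⟨ham, hmax⟩⟩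
    · exact ⟨a, Finset.mem_cons_self a s, (Finset.forall_mem_cons _ _).2
        ⟨r.refl a, fun b hb => r.trans _ _ _ (hmax b hb) hma⟩⟩

theorem exists_isDeg (r : AdmissibleOrder n k) {f : PolyVec R n k} (hf : f ≠ 0) :
    ∃ m, IsDeg r f m := by
  classical
  set s : Finset (MonV n k) := Finset.univ.biUnion fun i => (f i).support ×ˢ {i}
  have hs : ∀ m : MonV n k, m ∈ s ↔ (f m.2).coeff m.1 ≠ 0 := by
    rintro ⟨β, i⟩
    simp [s]
  obtain ⟨i, hi⟩ := Function.ne_iff.1 hf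
  obtain ⟨β, hβ⟩ := MvPolynomial.ne_zero_iff.1 hi
  obtain ⟨m, hm, hmax⟩ := r.exists_max ⟨(β, i), (hs _).2 hβ⟩
  exact ⟨m, (hs m).1 hm, fun m' hm' => hmax m' ((hs m').2 hm')⟩

theorem IsDeg.ne_zero {r : AdmissibleOrder n k} {f : PolyVec R n k} {m : MonV n k}
    (h : IsDeg r f m) : f ≠ 0 := by
  rintro rfl
  exact h.1 rfl

/-- Elements of `I` whose monomial vectors are all at most `m` are admitted, not only those with
leading monomial vector `m`, so that `0` and sums with cancelling leading terms stay inside. -/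
def leadingCoeffIdeal (r : AdmissibleOrder n k)
    (I : Submodule (MvPolynomial (Fin n) R) (PolyVec R n k)) (m : MonV n k) : Ideal R where
  carrier :=
    {a | ∃ f ∈ I, (∀ m', (f m'.2).coeff m'.1 ≠ 0 → r.le m' m) ∧ (f m.2).coeff m.1 = a}
  zero_mem' := ⟨0, I.zero_mem, fun _ h => absurd rfl h, rfl⟩
  add_mem' := by
    rintro _ _ ⟨f, hfI, hf, rfl⟩ ⟨g, hgI, hg, rfl⟩
    refine ⟨f + g, I.add_mem hfI hgI, fun m' h => ?_, MvPolynomial.coeff_add _ _ _⟩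
    by_cases hf0 : (f m'.2).coeff m'.1 = 0
    · rw [Pi.add_apply, MvPolynomial.coeff_add, hf0, zero_add] at h
      exact hg m' h
    · exact hf m' hf0
  smul_mem' := by
    rintro c _ ⟨f, hfI, hf, rfl⟩
    refine ⟨MvPolynomial.C c • f, I.smul_mem _ hfI, fun m' h => hf m' ?_,
      MvPolynomial.coeff_C_mul _ _ _⟩
    rw [Pi.smul_apply, smul_eq_mul, MvPolynomial.coeff_C_mul] at h
    exact right_ne_zero_of_mul h

section leadingCoeffIdeal

variable {r : AdmissibleOrder n k} {I : Submodule (MvPolynomial (Fin n) R) (PolyVec R n k)}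

theorem IsDeg.coeff_mem_leadingCoeffIdeal {f : PolyVec R n k} {m : MonV n k} (hfI : f ∈ I)
    (hf : IsDeg r f m) : (f m.2).coeff m.1 ∈ leadingCoeffIdeal r I m :=
  ⟨f, hfI, hf.2, rfl⟩

theorem exists_isDeg_of_mem_leadingCoeffIdeal {m : MonV n k} {a : R}
    (ha : a ∈ leadingCoeffIdeal r I m) (ha0 : a ≠ 0) :
    ∃ f ∈ I, IsDeg r f m ∧ (f m.2).coeff m.1 = a := by
  obtain ⟨f, hfI, hf, rfl⟩ := ha
  exact ⟨f, hfI, ⟨ha0, hf⟩, rfl⟩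

theorem leadingCoeffIdeal_mono (i : Fin k) :
    Monotone fun β => leadingCoeffIdeal r I (β, i) := by
  classical
  rintro β β' hββ' _ ⟨f, hfI, hf, rfl⟩
  refine ⟨MvPolynomial.monomial (β' - β) 1 • f, I.smul_mem _ hfI, fun m' h => ?_, ?_⟩
  · rw [Pi.smul_apply, smul_eq_mul, MvPolynomial.coeff_monomial_mul'] at h
    split_ifs at h with hle
    · have := r.add_le _ _ (β' - β) _ _ (hf (m'.1 - (β' - β), m'.2) (right_ne_zero_of_mul h))
      rwa [tsub_add_cancel_of_le hle, add_tsub_cancel_of_le hββ'] at this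
    · exact absurd rfl h
  · simp [MvPolynomial.coeff_monomial_mul', tsub_tsub_cancel_of_le hββ']

variable [IsPrincipalIdealRing R]

theorem exists_isDeg_coeff_eq_generator {f : PolyVec R n k} {m : MonV n k} (hfI : f ∈ I)
    (hf : IsDeg r f m) : ∃ g ∈ I, IsDeg r g m ∧
      (g m.2).coeff m.1 = Submodule.IsPrincipal.generator (leadingCoeffIdeal r I m) := by
  refine exists_isDeg_of_mem_leadingCoeffIdeal (Submodule.IsPrincipal.generator_mem _) ?_
  rw [ne_eq, ← Submodule.IsPrincipal.eq_bot_iff_generator_eq_zero]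
  exact fun h => hf.1 ((Submodule.eq_bot_iff _).1 h _ (hf.coeff_mem_leadingCoeffIdeal hfI))

theorem exists_finset_isSGB_of_isPrincipalIdealRing (r : AdmissibleOrder n k)
    (I : Submodule (MvPolynomial (Fin n) R) (PolyVec R n k)) :
    ∃ G : Finset (PolyVec R n k), IsSGB r (↑G) I := by
  classical
  choose! g hgI hg hglc using fun m (⟨_, hfI, hf⟩ : ∃ f ∈ I, IsDeg r f m) =>
    exists_isDeg_coeff_eq_generator hfI hf
  choose D hDS hD using fun i : Fin k =>
    (leadingCoeffIdeal_mono (r := r) (I := I) i).exists_finset_basis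
      {β | ∃ f ∈ I, IsDeg r f (β, i)}
  refine ⟨Finset.univ.biUnion fun i => (D i).image fun d => g (d, i), ?_, ?_⟩
  · intro h hh
    simp only [Finset.coe_biUnion, Finset.coe_image, Set.mem_iUnion, Set.mem_image] at hh
    obtain ⟨i, -, d, hd, rfl⟩ := hh
    exact ⟨hgI _ (hDS i hd), (hg _ (hDS i hd)).ne_zero⟩
  · intro f hfI hf
    obtain ⟨⟨β, i⟩, hfβ⟩ := exists_isDeg r hf
    obtain ⟨d, hd, hdβ, hJ⟩ := hD i β ⟨f, hfI, hfβ⟩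
    refine ⟨g (d, i),
      Finset.mem_biUnion.2 ⟨i, Finset.mem_univ i, Finset.mem_image_of_mem _ hd⟩,
      (d, i), (β, i), hg _ (hDS i hd), hfβ, rfl, hdβ, ?_⟩
    rw [hglc _ (hDS i hd), ← Ideal.mem_span_singleton, Ideal.span_singleton_generator]
    exact hJ (hfβ.coeff_mem_leadingCoeffIdeal hfI)

end leadingCoeffIdeal

theorem exists_finite_strong_groebner_basis_general
    {R : Type*} [CommRing R] [IsDomain R] {n k : ℕ}
    {W : Type*} [LinearOrder W] [WellFoundedLT W]
    (δ : R → W)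
    (hmul : ∀ a b : R, a ≠ 0 → δ b ≤ δ (a * b))
    (hdiv : ∀ a b : R, a ≠ 0 → ∃ q s : R, b = q * a + s ∧ δ s < δ a)
    (r : AdmissibleOrder n k)
    (I : Submodule (MvPolynomial (Fin n) R) (PolyVec R n k)) :
    ∃ G : Finset (PolyVec R n k), IsSGB r (↑G) I :=
  haveI := IsPrincipalIdealRing.of_euclidean_grading δ hmul hdiv
  exists_finset_isSGB_of_isPrincipalIdealRing r I

/-- Every submodule of `R[x₁,…,x_n]^k` over a Euclidean domain `R`
(with grading `δ` into a well ordered set `W`) has a finite strong Gröbner basis with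
respect to any admissible order on the monomial vectors. -/
theorem exists_finite_strong_groebner_basis
    {R : Type*} [CommRing R] [IsDomain R] {n k : ℕ}
    {W : Type*} [LinearOrder W] [WellFoundedLT W]
    (δ : R → W)
    (hzero : ∀ a : R, δ 0 ≤ δ a)
    (hmul : ∀ a b : R, a ≠ 0 → δ b ≤ δ (a * b))
    (hdiv : ∀ a b : R, a ≠ 0 → ∃ q s : R, b = q * a + s ∧ δ s < δ a)
    (r : AdmissibleOrder n k)
    (I : Submodule (MvPolynomial (Fin n) R) (PolyVec R n k)) :
    ∃ G : Finset (PolyVec R n k), IsSGB r (↑G) I :=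
  exists_finite_strong_groebner_basis_general δ hmul hdiv r I
end

section
/- Let R be a Euclidean domain, let f̃, g̃ ∈ R[x₁,…,x_n] have leading terms a·x^α and u·x^β respectively, where u is a unit of R and x^α, x^β are coprime monomials (for each j, α_j = 0 or β_j = 0). Set f := f̃·e_i and g := g̃·e_i in R[x₁,…,x_n]^k. Then {f, g} has an S-polynomial vector that is 0 or has a strong standard representation by {f, g}. -/
open MvPolynomial

variable {R : Type*} [CommRing R] {n k : ℕ}

/-- The polynomial vector `p · e_i`. -/
noncomputable def eVec {R : Type*} [CommRing R] {n k : ℕ} (i : Fin k)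
    (p : MvPolynomial (Fin n) R) : PolyVec R n k :=
  fun j => if j = i then p else 0


section Aux

variable {R : Type*} [CommRing R] {n k : ℕ}

lemma eVec_apply_self {R : Type*} [CommRing R] {n k : ℕ} (i : Fin k)
    (p : MvPolynomial (Fin n) R) : eVec i p i = p := by simp [eVec]

lemma eVec_apply_ne {R : Type*} [CommRing R] {n k : ℕ} {i j : Fin k} (h : j ≠ i)
    (p : MvPolynomial (Fin n) R) : eVec i p j = 0 := by simp [eVec, h]

lemma isDeg_eVec_iff (r : AdmissibleOrder n k) (p : MvPolynomial (Fin n) R)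
    (μ : Fin n →₀ ℕ) (i : Fin k) :
    IsDeg r (eVec (R := R) i p) (μ, i) ↔
      p.coeff μ ≠ 0 ∧ ∀ m, p.coeff m ≠ 0 → r.le (m, i) (μ, i) := by
  constructor
  · rintro ⟨h1, h2⟩
    refine ⟨by simpa [eVec_apply_self] using h1, fun m hm => ?_⟩
    exact h2 (m, i) (by simpa [eVec_apply_self] using hm)
  · rintro ⟨h1, h2⟩
    refine ⟨by simpa [eVec_apply_self] using h1, ?_⟩
    rintro ⟨m, j⟩ hm
    by_cases hj : j = i
    · subst hj
      exact h2 m (by simpa [eVec_apply_self] using hm)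
    · simp [eVec_apply_ne hj] at hm

lemma delta_zero_lt {W : Type*} [LinearOrder W] (δ : R → W)
    (hmul : ∀ a b : R, a ≠ 0 → δ b ≤ δ (a * b))
    (hdiv : ∀ a b : R, a ≠ 0 → ∃ q s : R, b = q * a + s ∧ δ s < δ a)
    {a : R} (ha : a ≠ 0) : δ 0 < δ a := by
  obtain ⟨q, s, h1, h2⟩ := hdiv a 0 ha
  by_cases hq : q = 0
  · subst hq; simp at h1; subst h1; simpa using h2
  · exfalso
    have hs : s = (-q) * a := by linear_combination -h1
    have := hmul (-q) a (neg_ne_zero.mpr hq)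
    rw [← hs] at this
    exact absurd (lt_of_le_of_lt this h2) (lt_irrefl _)

end Aux

/-- **Buchberger's coprimality criterion.** If `f̃, g̃ ∈ R[x₁,…,x_n]`
have leading terms `a·x^α` and `u·x^β` with `u` a unit and `x^α, x^β` coprime, then
for `f := f̃·e_i`, `g := g̃·e_i`, the set `{f, g}` has an `S`-polynomial vector that is
`0` or has a strong standard representation by `{f, g}`. -/
theorem spoly_of_coprime_leading_monomials
    {R : Type*} [CommRing R] [IsDomain R] {n k : ℕ}
    {W : Type*} [LinearOrder W] [WellFoundedLT W]
    (δ : R → W)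
    (hzero : ∀ a : R, δ 0 ≤ δ a)
    (hmul : ∀ a b : R, a ≠ 0 → δ b ≤ δ (a * b))
    (hdiv : ∀ a b : R, a ≠ 0 → ∃ q s : R, b = q * a + s ∧ δ s < δ a)
    (r : AdmissibleOrder n k)
    (ft gt : MvPolynomial (Fin n) R) (i : Fin k)
    (α β : Fin n →₀ ℕ) (a u : R)
    (hf : IsDeg r (eVec i ft) (α, i)) (hfa : ft.coeff α = a)
    (hg : IsDeg r (eVec i gt) (β, i)) (hgu : gt.coeff β = u)
    (hu : IsUnit u)
    (hcop : ∀ j : Fin n, α j = 0 ∨ β j = 0) :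
    ∃ h, IsSPolySet δ r (eVec i ft) (eVec i gt) h ∧
      (h = 0 ∨ IsSSR r {eVec i ft, eVec i gt} h) := by
  classical
  obtain ⟨hfa0, hfb⟩ := (isDeg_eVec_iff r ft α i).mp hf
  obtain ⟨hgu0, hgb⟩ := (isDeg_eVec_iff r gt β i).mp hg
  have ha0 : a ≠ 0 := hfa ▸ hfa0
  have hu0 : u ≠ 0 := hgu ▸ hgu0
  set v : R := ↑hu.unit⁻¹ with hv
  have hvu : v * u = 1 := by
    have := hu.unit.inv_mul
    rwa [hu.unit_spec] at this
  have hv0 : v ≠ 0 := by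
    intro h; rw [h, zero_mul] at hvu; exact zero_ne_one hvu
  have hav : a * v ≠ 0 := mul_ne_zero ha0 hv0
  have havu : a * v * u = a := by rw [mul_assoc, hvu, mul_one]
  have hq : a - a * v * u = 0 := by rw [havu, sub_self]
  have hsup : α ⊔ β = α + β := by
    ext j
    rw [Finsupp.sup_apply, Finsupp.add_apply]
    rcases hcop j with h | h <;> simp [h]
  -- the S-polynomial vector
  set h : PolyVec R n k :=
    termSMul α 1 (eVec i ft) - termSMul β (a * v) (eVec i gt) with hh
  set H : MvPolynomial (Fin n) R :=
    monomial α 1 * ft - monomial β (a * v) * gt with hH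
  have hhH : h = eVec i H := by
    funext j
    by_cases hj : j = i
    · subst hj; simp [hh, hH, termSMul, eVec_apply_self, Pi.sub_apply]
    · simp [hh, hH, termSMul, eVec_apply_ne hj, Pi.sub_apply]
  -- generic bound on coefficients of (monomial γ c * p)
  have bound : ∀ (c : R) (γ : Fin n →₀ ℕ) (p : MvPolynomial (Fin n) R)
      (μ : Fin n →₀ ℕ), (∀ m, p.coeff m ≠ 0 → r.le (m, i) (μ, i)) →
      ∀ m, (monomial γ c * p).coeff m ≠ 0 → r.le (m, i) (μ + γ, i) := by
    intro c γ p μ hp m hm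
    rw [coeff_monomial_mul' m γ c p] at hm
    by_cases hle : γ ≤ m
    · rw [if_pos hle] at hm
      have hpc : p.coeff (m - γ) ≠ 0 := by
        intro h0; rw [h0, mul_zero] at hm; exact hm rfl
      have := r.add_le _ _ γ i i (hp _ hpc)
      rwa [tsub_add_cancel_of_le hle] at this
    · rw [if_neg hle] at hm; exact absurd rfl hm
  have boundf := bound 1 α ft α hfb
  have boundg := bound (a * v) β gt β hgb
  have hc1 : (monomial α (1 : R) * ft).coeff (α + α) = a := by
    rw [coeff_monomial_mul, one_mul, hfa]
  have hc2 : (monomial β (a * v) * gt).coeff (β + β) = a := by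
    rw [coeff_monomial_mul, hgu, havu]
  -- the S-poly pair witness (used in all cases)
  have hpair : IsSPolySet δ r (eVec i ft) (eVec i gt) h := by
    left
    refine ⟨(α, i), (β, i), hf, hg, Or.inr ⟨rfl, ?_, a * v, ?_, ?_⟩⟩
    · show δ ((eVec i gt i).coeff β) ≤ δ ((eVec i ft i).coeff α)
      rw [eVec_apply_self, eVec_apply_self, hfa, hgu]
      have := hmul (a * v) u hav
      rwa [havu] at this
    · show δ ((eVec i ft i).coeff α - a * v * (eVec i gt i).coeff β)
        < δ ((eVec i ft i).coeff α)
      rw [eVec_apply_self, eVec_apply_self, hfa, hgu, hq]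
      exact delta_zero_lt δ hmul hdiv ha0
    · show h = termSMul ((α ⊔ β) - β) 1 (eVec i ft)
        - termSMul ((α ⊔ β) - α) (a * v) (eVec i gt)
      rw [hsup, add_tsub_cancel_right, add_tsub_cancel_left]
  refine ⟨h, hpair, ?_⟩
  rcases r.total ((α + α, i) : MonV n k) ((β + β, i) : MonV n k) with htot | htot
  · by_cases hba : r.le (β + β, i) (α + α, i)
    · -- equal leading monomials: α = β = 0, h = 0
      left
      have heq : ((α + α, i) : MonV n k) = (β + β, i) := r.antisymm _ _ htot hba
      have hαβ : α = β := by
        have h2 : α + α = β + β := congrArg Prod.fst heq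
        ext j
        have := congrFun (congrArg (fun f : Fin n →₀ ℕ => (f : Fin n → ℕ)) h2) j
        simp only [Finsupp.coe_add, Pi.add_apply] at this
        omega
      subst hαβ
      have hα0 : α = 0 := by
        ext j
        rcases hcop j with h0 | h0 <;> simpa using h0
      subst hα0
      have hH0 : H = 0 := by
        apply MvPolynomial.ext
        intro m
        rw [hH, MvPolynomial.coeff_sub, MvPolynomial.coeff_zero]
        by_cases hm : m = 0
        · subst hm
          have e1 : (monomial 0 (1 : R) * ft).coeff 0 = a := by
            simpa using hc1
          have e2 : (monomial 0 (a * v) * gt).coeff 0 = a := by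
            simpa using hc2
          rw [e1, e2, sub_self]
        · have e1 : ft.coeff m = 0 := by
            by_contra hft
            have h1 := hfb m hft
            have h2 := r.dvd_le 0 m i (fun j => Nat.zero_le _)
            have := r.antisymm _ _ h1 h2
            exact hm (congrArg Prod.fst this)
          have e2 : gt.coeff m = 0 := by
            by_contra hgt
            have h1 := hgb m hgt
            have h2 := r.dvd_le 0 m i (fun j => Nat.zero_le _)
            have := r.antisymm _ _ h1 h2
            exact hm (congrArg Prod.fst this)
          rw [coeff_monomial_mul' m 0 (1 : R) ft,
            coeff_monomial_mul' m 0 (a * v) gt]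
          simp [e1, e2]
      rw [hhH, hH0]
      funext j
      simp [eVec]
    · -- case B : leading monomial (β+β, i)
      right
      have hHcoeff : H.coeff (β + β) = -a := by
        have e1 : (monomial α (1 : R) * ft).coeff (β + β) = 0 := by
          by_contra hc
          exact hba (boundf _ hc)
        rw [hH, MvPolynomial.coeff_sub, e1, hc2, zero_sub]
      have hHdeg : IsDeg r h ((β + β, i) : MonV n k) := by
        rw [hhH]
        refine (isDeg_eVec_iff r H (β + β) i).mpr ⟨by rw [hHcoeff]; simpa using ha0, ?_⟩
        intro m hm
        rw [hH, MvPolynomial.coeff_sub] at hm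
        by_cases hc : (monomial β (a * v) * gt).coeff m ≠ 0
        · exact boundg _ hc
        · push_neg at hc
          rw [hc, sub_zero] at hm
          exact r.trans _ _ _ (boundf _ hm) htot
      refine ⟨2, by norm_num, ![-(a * v), 1], ![β, α], ![eVec i gt, eVec i ft],
        ?_, ?_, (β + β, i), (β, i), hHdeg, by simpa using hg, by simp, ?_⟩
      · intro j; fin_cases j <;> simp
      · rw [Fin.sum_univ_two]
        show h = termSMul β (-(a * v)) (eVec i gt) + termSMul α 1 (eVec i ft)
        rw [hh]
        funext j
        simp only [termSMul, Pi.sub_apply, Pi.add_apply, map_neg, neg_mul]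
        ring
      · intro j hj
        fin_cases j
        · exact absurd rfl hj
        · refine ⟨(α, i), hf, ?_, ?_⟩
          · simpa using htot
          · simp only [Matrix.cons_val_one, Matrix.head_cons]
            intro hEq
            apply hba
            rw [← hEq]
            exact r.refl _
  · by_cases hab : r.le (α + α, i) (β + β, i)
    · -- equal case again (symmetric)
      left
      have heq : ((α + α, i) : MonV n k) = (β + β, i) := r.antisymm _ _ hab htot
      have hαβ : α = β := by
        have h2 : α + α = β + β := congrArg Prod.fst heq
        ext j
        have := congrFun (congrArg (fun f : Fin n →₀ ℕ => (f : Fin n → ℕ)) h2) j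
        simp only [Finsupp.coe_add, Pi.add_apply] at this
        omega
      subst hαβ
      have hα0 : α = 0 := by
        ext j
        rcases hcop j with h0 | h0 <;> simpa using h0
      subst hα0
      have hH0 : H = 0 := by
        apply MvPolynomial.ext
        intro m
        rw [hH, MvPolynomial.coeff_sub, MvPolynomial.coeff_zero]
        by_cases hm : m = 0
        · subst hm
          have e1 : (monomial 0 (1 : R) * ft).coeff 0 = a := by
            simpa using hc1
          have e2 : (monomial 0 (a * v) * gt).coeff 0 = a := by
            simpa using hc2
          rw [e1, e2, sub_self]
        · have e1 : ft.coeff m = 0 := by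
            by_contra hft
            have h1 := hfb m hft
            have h2 := r.dvd_le 0 m i (fun j => Nat.zero_le _)
            have := r.antisymm _ _ h1 h2
            exact hm (congrArg Prod.fst this)
          have e2 : gt.coeff m = 0 := by
            by_contra hgt
            have h1 := hgb m hgt
            have h2 := r.dvd_le 0 m i (fun j => Nat.zero_le _)
            have := r.antisymm _ _ h1 h2
            exact hm (congrArg Prod.fst this)
          rw [coeff_monomial_mul' m 0 (1 : R) ft,
            coeff_monomial_mul' m 0 (a * v) gt]
          simp [e1, e2]
      rw [hhH, hH0]
      funext j
      simp [eVec]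
    · -- case A : leading monomial (α+α, i)
      right
      have hHcoeff : H.coeff (α + α) = a := by
        have e2 : (monomial β (a * v) * gt).coeff (α + α) = 0 := by
          by_contra hc
          exact hab (boundg _ hc)
        rw [hH, MvPolynomial.coeff_sub, e2, hc1, sub_zero]
      have hHdeg : IsDeg r h ((α + α, i) : MonV n k) := by
        rw [hhH]
        refine (isDeg_eVec_iff r H (α + α) i).mpr ⟨by rw [hHcoeff]; exact ha0, ?_⟩
        intro m hm
        rw [hH, MvPolynomial.coeff_sub] at hm
        by_cases hc : (monomial α (1 : R) * ft).coeff m ≠ 0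
        · exact boundf _ hc
        · push_neg at hc
          rw [hc, zero_sub, neg_ne_zero] at hm
          exact r.trans _ _ _ (boundg _ hm) htot
      refine ⟨2, by norm_num, ![1, -(a * v)], ![α, β], ![eVec i ft, eVec i gt],
        ?_, ?_, (α + α, i), (α, i), hHdeg, by simpa using hf, by simp, ?_⟩
      · intro j; fin_cases j <;> simp
      · rw [Fin.sum_univ_two]
        show h = termSMul α 1 (eVec i ft) + termSMul β (-(a * v)) (eVec i gt)
        rw [hh]
        funext j
        simp only [termSMul, Pi.sub_apply, Pi.add_apply, map_neg, neg_mul]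
        ring
      · intro j hj
        fin_cases j
        · exact absurd rfl hj
        · refine ⟨(β, i), hg, ?_, ?_⟩
          · simpa using htot
          · simp only [Matrix.cons_val_one, Matrix.head_cons]
            intro hEq
            apply hab
            rw [← hEq]
            exact r.refl _
end

section
/- The relation ≤_P on R[x₁,…,x_n]^k, defined by p ≤_P q iff p = q or δ̂(coefficient of Lm(p−q) in p) < δ̂(coefficient of Lm(p−q) in q), is a well order: it is a total order with no infinite strictly descending chains. -/
open MvPolynomial

variable {R : Type*} [CommRing R] {n k : ℕ}

/-- The order `≤_P` on polynomial vectors: `p ≤_P q` iff `p = q` or the coefficient of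
`Lm(p − q)` in `p` is `δ̂`-smaller than the one in `q`. -/
def LeP {R : Type*} [CommRing R] {n k : ℕ} {W' : Type*} [LinearOrder W']
    (dh : R → W') (r : AdmissibleOrder n k) (p q : PolyVec R n k) : Prop :=
  p = q ∨ ∃ m : MonV n k, IsDeg r (p - q) m ∧
    dh ((p m.2).coeff m.1) < dh ((q m.2).coeff m.1)

/-! Read a polynomial vector as the finitely supported function sending each monomial vector to
its coefficient. Then `p ≤_P q` says exactly that `p ≤ q` colexicographically: monomial vectors
are ordered by `r`, coefficients by `δ̂`, and `p` and `q` are compared at the `r`-largest monomial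
vector where they differ. The colexicographic order on finitely supported functions is linear, and
it is well-founded as soon as the index order is (the admissible order is, by Dickson's lemma,
since it extends divisibility within each position) and the value order is well-founded with `0`
at the bottom (here `δ̂ 0 ≤ δ̂ a`). -/

namespace AdmissibleOrder

variable (r : AdmissibleOrder n k)

/-- A type synonym carrying the order `r`; `MonV n k` itself already has the componentwise order
of a product. -/
def Mon (_ : AdmissibleOrder n k) : Type := MonV n k

noncomputable instance : LinearOrder r.Mon where
  le := r.le
  le_refl := r.refl
  le_trans := r.trans
  le_antisymm := r.antisymm
  le_total := r.total
  toDecidableLE := Classical.decRel _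

theorem wellQuasiOrdered : WellQuasiOrdered r.le := by
  have hdickson : WellQuasiOrdered fun a b : MonV n k => a.1 ≤ b.1 ∧ a.2 = b.2 :=
    wellQuasiOrdered_le.prod (Finite.wellQuasiOrdered _)
  refine fun f => (hdickson f).imp fun i => .imp fun j => .imp_right ?_
  obtain ⟨α, a⟩ := f i
  obtain ⟨β, b⟩ := f j
  rintro ⟨hle, rfl : a = b⟩
  exact r.dvd_le α β a (Finsupp.le_def.mp hle)

instance : WellFoundedLT r.Mon :=
  have : WellQuasiOrderedLE r.Mon := ⟨r.wellQuasiOrdered⟩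
  inferInstance

noncomputable def coeffs (p : PolyVec R n k) : r.Mon →₀ R :=
  Finsupp.onFinset (Finset.univ.biUnion fun j => (p j).support.image fun α => (α, j))
    (fun m : MonV n k => (p m.2).coeff m.1)
    (fun m hm => Finset.mem_biUnion.mpr
      ⟨m.2, Finset.mem_univ _, Finset.mem_image.mpr ⟨m.1, mem_support_iff.mpr hm, rfl⟩⟩)

theorem coeffs_injective : Function.Injective (r.coeffs (R := R)) :=
  fun _ _ h => funext fun j => MvPolynomial.ext _ _ fun α => DFunLike.congr_fun h (α, j)

end AdmissibleOrder

theorem isDeg_sub_iff {r : AdmissibleOrder n k} {p q : PolyVec R n k} {m : r.Mon} :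
    IsDeg r (p - q) m ↔
      r.coeffs p m ≠ r.coeffs q m ∧ ∀ m', m < m' → r.coeffs p m' = r.coeffs q m' := by
  simp only [IsDeg, Pi.sub_apply, coeff_sub, sub_ne_zero]
  exact and_congr_right fun _ => forall_congr' fun (m' : r.Mon) =>
    not_imp_comm.trans (imp_congr_left (not_le (a := m') (b := m)))

theorem leP_iff_toColex_le [LinearOrder R] {W' : Type*} [LinearOrder W'] {dh : R → W'}
    (hdh : StrictMono dh) (r : AdmissibleOrder n k) {p q : PolyVec R n k} :
    LeP dh r p q ↔ toColex (r.coeffs p) ≤ toColex (r.coeffs q) := by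
  rw [le_iff_eq_or_lt, toColex_inj, r.coeffs_injective.eq_iff, Finsupp.Colex.lt_iff]
  refine or_congr Iff.rfl ⟨fun ⟨m, hm, hlt⟩ => ?_, fun ⟨m, heq, hlt⟩ => ?_⟩
  · exact ⟨m, (isDeg_sub_iff.mp hm).2, hdh.lt_iff_lt.mp hlt⟩
  · exact ⟨m, isDeg_sub_iff.mpr ⟨hlt.ne, heq⟩, hdh.lt_iff_lt.mpr hlt⟩

theorem leP_well_order_general
    {R : Type*} [CommRing R] {n k : ℕ}
    {W' : Type*} [LinearOrder W'] [WellFoundedLT W']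
    (dh : R → W') (hinj : Function.Injective dh)
    (dh0 : ∀ a : R, dh 0 ≤ dh a)
    (r : AdmissibleOrder n k) :
    (∀ p, LeP dh r p p) ∧
    (∀ p q s, LeP dh r p q → LeP dh r q s → LeP dh r p s) ∧
    (∀ p q, LeP dh r p q → LeP dh r q p → p = q) ∧
    (∀ p q, LeP dh r p q ∨ LeP dh r q p) ∧
    ¬ ∃ f : ℕ → PolyVec R n k, ∀ i, LeP dh r (f (i + 1)) (f i) ∧ f (i + 1) ≠ f i := by
  let : LinearOrder R := LinearOrder.lift' dh hinj
  have hdh : StrictMono dh := fun _ _ => id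
  have : IsBotZeroClass R := ⟨dh0⟩
  have : WellFoundedLT R := hdh.wellFoundedLT
  have hembed : Function.Injective fun p : PolyVec R n k => toColex (r.coeffs p) :=
    toColex.injective.comp r.coeffs_injective
  simp only [leP_iff_toColex_le hdh]
  refine ⟨fun _ => le_rfl, fun _ _ _ => le_trans, fun _ _ h h' => hembed (le_antisymm h h'),
    fun _ _ => le_total _ _, ?_⟩
  rintro ⟨f, hf⟩
  obtain ⟨i, hi⟩ := WellFounded.not_rel_apply_succ (r := (· < ·)) (toColex ∘ r.coeffs ∘ f)
  exact hi ((hf i).1.lt_of_ne (hembed.ne (hf i).2))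

/-- The relation `≤_P` is a well order on `R[x₁,…,x_n]^k`: it is a
total order and has no infinite strictly descending chains. -/
theorem leP_well_order
    {R : Type*} [CommRing R] [IsDomain R] {n k : ℕ}
    {W : Type*} [LinearOrder W] [WellFoundedLT W]
    {W' : Type*} [LinearOrder W'] [WellFoundedLT W']
    (δ : R → W)
    (hzero : ∀ a : R, δ 0 ≤ δ a)
    (hmul : ∀ a b : R, a ≠ 0 → δ b ≤ δ (a * b))
    (hdiv : ∀ a b : R, a ≠ 0 → ∃ q s : R, b = q * a + s ∧ δ s < δ a)
    (dh : R → W') (hinj : Function.Injective dh)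
    (dh0 : ∀ a : R, dh 0 ≤ dh a)
    (hmono : ∀ a b : R, δ a < δ b → dh a < dh b)
    (r : AdmissibleOrder n k) :
    (∀ p, LeP dh r p p) ∧
    (∀ p q s, LeP dh r p q → LeP dh r q s → LeP dh r p s) ∧
    (∀ p q, LeP dh r p q → LeP dh r q p → p = q) ∧
    (∀ p q, LeP dh r p q ∨ LeP dh r q p) ∧
    ¬ ∃ f : ℕ → PolyVec R n k, ∀ i, LeP dh r (f (i + 1)) (f i) ∧ f (i + 1) ≠ f i :=
  leP_well_order_general dh hinj dh0 r
end

section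
/- Transitivity of strong standard representations: if every element of F has a strong standard representation by G, and every element of G has a strong standard representation by H, then every element of F has a strong standard representation by H. -/
open MvPolynomial

variable {R : Type*} [CommRing R] {n k : ℕ}

lemma isDeg_unique {R : Type*} [CommRing R] {n k : ℕ} (r : AdmissibleOrder n k)
    {f : PolyVec R n k} {m1 m2 : MonV n k} (h1 : IsDeg r f m1) (h2 : IsDeg r f m2) :
    m1 = m2 :=
  r.antisymm _ _ (h2.2 _ h1.1) (h1.2 _ h2.1)

lemma termSMul_termSMul {R : Type*} [CommRing R] {n k : ℕ}
    (m m' : Fin n →₀ ℕ) (a a' : R) (h : PolyVec R n k) :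
    termSMul m a (termSMul m' a' h) = termSMul (m + m') (a * a') h := by
  funext j
  simp only [termSMul]
  rw [← mul_assoc, MvPolynomial.monomial_mul]

lemma termSMul_sum {R : Type*} [CommRing R] {n k : ℕ} {ι : Type*} (s : Finset ι)
    (m : Fin n →₀ ℕ) (a : R) (h : ι → PolyVec R n k) :
    termSMul m a (∑ i ∈ s, h i) = ∑ i ∈ s, termSMul m a (h i) := by
  funext j
  simp [termSMul, Finset.sum_apply, Finset.mul_sum]

/-- **transitivity of strong standard representations.** If every
element of `F` has a strong standard representation by `G`, and every element of `G`
has one by `H`, then every element of `F` has a strong standard representation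
by `H`. -/
theorem ssr_trans
    {R : Type*} [CommRing R] [IsDomain R] {n k : ℕ}
    (r : AdmissibleOrder n k)
    (F G H : Set (PolyVec R n k))
    (hFG : ∀ f ∈ F, IsSSR r G f)
    (hGH : ∀ g ∈ G, IsSSR r H g) :
    ∀ f ∈ F, IsSSR r H f := by
  intro f hf
  obtain ⟨N, hN, a, m, g, hgG, hfsum, mf, m0, hmf, hm0, h0eq, hrest⟩ := hFG f hf
  choose Ns hNs a' m' h' hhH hgsum mg mh0 hmg hmh0 heq0 hrests using
    fun i => hGH (g i) (hgG i)
  -- the sigma index type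
  let S := Σ i : Fin N, Fin (Ns i)
  let p0 : S := ⟨⟨0, hN⟩, ⟨0, hNs ⟨0, hN⟩⟩⟩
  have hpos : 0 < Fintype.card S := Fintype.card_pos_iff.mpr ⟨p0⟩
  set T := Fintype.card S with hT
  let e0 : Fin T ≃ S := (Fintype.equivFin S).symm
  let e : Fin T ≃ S := (Equiv.swap (⟨0, hpos⟩ : Fin T) (e0.symm p0)).trans e0
  have he0 : e ⟨0, hpos⟩ = p0 := by
    simp [e, Equiv.swap_apply_left]
  -- the combined data
  refine ⟨T, hpos, fun t => a (e t).1 * a' (e t).1 (e t).2,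
    fun t => m (e t).1 + m' (e t).1 (e t).2, fun t => h' (e t).1 (e t).2,
    fun t => hhH _ _, ?_, mf, mh0 ⟨0, hN⟩, hmf, ?_, ?_, ?_⟩
  · -- the sum identity
    have step : ∀ i, termSMul (m i) (a i) (g i) =
        ∑ j, termSMul (m i + m' i j) (a i * a' i j) (h' i j) := by
      intro i
      rw [hgsum i, termSMul_sum]
      exact Finset.sum_congr rfl fun j _ => termSMul_termSMul _ _ _ _ _
    calc f = ∑ i, termSMul (m i) (a i) (g i) := hfsum
      _ = ∑ i, ∑ j, termSMul (m i + m' i j) (a i * a' i j) (h' i j) :=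
          Finset.sum_congr rfl fun i _ => step i
      _ = ∑ p : S, termSMul (m p.1 + m' p.1 p.2) (a p.1 * a' p.1 p.2) (h' p.1 p.2) :=
          Finset.sum_sigma' _ _ _
      _ = ∑ t : Fin T, termSMul (m (e t).1 + m' (e t).1 (e t).2)
            (a (e t).1 * a' (e t).1 (e t).2) (h' (e t).1 (e t).2) :=
          (Equiv.sum_comp e fun p : S =>
            termSMul (m p.1 + m' p.1 p.2) (a p.1 * a' p.1 p.2) (h' p.1 p.2)).symm
  · -- IsDeg of the first summand's basis element
    have key : h' (e ⟨0, hpos⟩).1 (e ⟨0, hpos⟩).2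
        = h' ⟨0, hN⟩ ⟨0, hNs ⟨0, hN⟩⟩ :=
      congrArg (fun p : S => h' p.1 p.2) he0
    beta_reduce
    rw [key]
    exact hmh0 ⟨0, hN⟩
  · -- leading monomial matches
    have key2 : m (e ⟨0, hpos⟩).1 + m' (e ⟨0, hpos⟩).1 (e ⟨0, hpos⟩).2
        = m ⟨0, hN⟩ + m' ⟨0, hN⟩ ⟨0, hNs ⟨0, hN⟩⟩ :=
      congrArg (fun p : S => m p.1 + m' p.1 p.2) he0
    beta_reduce
    rw [key2]
    have hu : mg ⟨0, hN⟩ = m0 := isDeg_unique r (hmg _) hm0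
    have h1 : m' ⟨0, hN⟩ ⟨0, hNs ⟨0, hN⟩⟩ + (mh0 ⟨0, hN⟩).1 = m0.1 := by
      have := congrArg Prod.fst (heq0 ⟨0, hN⟩)
      simpa [hu] using this
    have h2 : (mh0 ⟨0, hN⟩).2 = m0.2 := by
      have := congrArg Prod.snd (heq0 ⟨0, hN⟩)
      simpa [hu] using this
    show (_ + _ + _, _) = mf
    rw [add_assoc, h1, h2, h0eq]
  · -- lower order terms
    intro t ht
    have hpne : e t ≠ p0 := fun h => ht (e.injective (h.trans he0.symm))
    rcases hpe : e t with ⟨i, j⟩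
    have kH : h' (e t).1 (e t).2 = h' i j :=
      congrArg (fun p : S => h' p.1 p.2) hpe
    have kM : m (e t).1 + m' (e t).1 (e t).2 = m i + m' i j :=
      congrArg (fun p : S => m p.1 + m' p.1 p.2) hpe
    rw [hpe] at hpne
    beta_reduce
    rw [kH, kM]
    by_cases hi : i = ⟨0, hN⟩
    · -- i = 0, so j ≠ 0
      subst hi
      have hj : j ≠ ⟨0, hNs ⟨0, hN⟩⟩ := by
        intro hj; exact hpne (by rw [hj])
      obtain ⟨mij, hd, hle, hne⟩ := hrests ⟨0, hN⟩ j hj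
      have hu : mg ⟨0, hN⟩ = m0 := isDeg_unique r (hmg ⟨0, hN⟩) hm0
      rw [hu] at hle hne
      refine ⟨mij, hd, ?_, ?_⟩
      · have hadd := r.add_le _ _ (m ⟨0, hN⟩) _ _ hle
        have harr : m' ⟨0, hN⟩ j + mij.1 + m ⟨0, hN⟩ = m ⟨0, hN⟩ + m' ⟨0, hN⟩ j + mij.1 := by
          rw [add_comm (m' ⟨0, hN⟩ j + mij.1) (m ⟨0, hN⟩), add_assoc]
        have harr2 : m0.1 + m ⟨0, hN⟩ = m ⟨0, hN⟩ + m0.1 := add_comm _ _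
        rw [harr, harr2] at hadd
        have hfin : r.le (m ⟨0, hN⟩ + m' ⟨0, hN⟩ j + mij.1, mij.2) (m ⟨0, hN⟩ + m0.1, m0.2) := hadd
        rw [h0eq] at hfin
        exact hfin
      · intro hcon
        rw [← h0eq] at hcon
        apply hne
        obtain ⟨h1, h2⟩ := Prod.mk.inj hcon
        rw [add_assoc] at h1
        have := add_left_cancel h1
        rw [Prod.ext_iff]
        exact ⟨this, h2⟩
    · -- i ≠ 0
      obtain ⟨mgi, hdgi, hlei, hnei⟩ := hrest i hi
      have hu : mg i = mgi := isDeg_unique r (hmg i) hdgi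
      by_cases hj : j = ⟨0, hNs i⟩
      · subst hj
        refine ⟨mh0 i, hmh0 i, ?_, ?_⟩
        · have h1 : m' i ⟨0, hNs i⟩ + (mh0 i).1 = mgi.1 := by
            have := congrArg Prod.fst (heq0 i); simpa [hu] using this
          have h2 : (mh0 i).2 = mgi.2 := by
            have := congrArg Prod.snd (heq0 i); simpa [hu] using this
          have : ((m i + m' i ⟨0, hNs i⟩ + (mh0 i).1, (mh0 i).2) : MonV n k)
              = (m i + mgi.1, mgi.2) := by
            rw [Prod.ext_iff]; exact ⟨by rw [add_assoc, h1], h2⟩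
          rw [this]
          exact hlei
        · have h1 : m' i ⟨0, hNs i⟩ + (mh0 i).1 = mgi.1 := by
            have := congrArg Prod.fst (heq0 i); simpa [hu] using this
          have h2 : (mh0 i).2 = mgi.2 := by
            have := congrArg Prod.snd (heq0 i); simpa [hu] using this
          have heqm : ((m i + m' i ⟨0, hNs i⟩ + (mh0 i).1, (mh0 i).2) : MonV n k)
              = (m i + mgi.1, mgi.2) := by
            rw [Prod.ext_iff]; exact ⟨by rw [add_assoc, h1], h2⟩
          rw [heqm]
          exact hnei
      · obtain ⟨mij, hd, hle, hne⟩ := hrests i j hj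
        rw [hu] at hle hne
        refine ⟨mij, hd, ?_, ?_⟩
        · have hadd := r.add_le _ _ (m i) _ _ hle
          have harr : m' i j + mij.1 + m i = m i + m' i j + mij.1 := by
            rw [add_comm (m' i j + mij.1) (m i), add_assoc]
          have harr2 : mgi.1 + m i = m i + mgi.1 := add_comm _ _
          rw [harr, harr2] at hadd
          exact r.trans _ _ _ hadd hlei
        · intro hcon
          apply hnei
          have hadd := r.add_le _ _ (m i) _ _ hle
          have harr : m' i j + mij.1 + m i = m i + m' i j + mij.1 := by
            rw [add_comm (m' i j + mij.1) (m i), add_assoc]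
          have harr2 : mgi.1 + m i = m i + mgi.1 := add_comm _ _
          rw [harr, harr2, hcon] at hadd
          exact r.antisymm _ _ hlei hadd
end

section
/- Let R be a Euclidean domain, A ∈ R[x]^{r'×s}, and let H = (h_{tj}) ∈ R[x]^{r×s} be a matrix whose rows form a reduced strong Gröbner basis of the row module of A with respect to the position-over-term order built from admissible monomial orders ≤₁,…,≤_s. For i ∈ {1,…,s}, let S_i := {h_{t,i} : t ∈ {1,…,r}, h_{t,i} ≠ 0, h_{t,1} = ⋯ = h_{t,i−1} = 0}, and let F_i := {p ∈ R[x] : ∃ p_{i+1},…,p_s with (0,…,0,p,p_{i+1},…,p_s) ∈ row(A)} be the i-th fork ideal. Then S_i is a strong Gröbner basis of the ideal F_i of R[x] with respect to ≤_i. -/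
open MvPolynomial

variable {R : Type*} [CommRing R] {n k : ℕ}

section Reduction

variable {R : Type*} [CommRing R] {n k : ℕ} {W' : Type*} [LinearOrder W']

/-- The term `b·x^α e_i` is reducible by `G`: some `g ∈ G` has `Lm(g) ∣ x^α e_i` and
`δ̂(b − q·Lc(g)) < δ̂(b)` for some `q ∈ R`. -/
def TermRed (dh : R → W') (r : AdmissibleOrder n k) (G : Set (PolyVec R n k))
    (b : R) (α : Fin n →₀ ℕ) (i : Fin k) : Prop :=
  ∃ g ∈ G, ∃ mg : MonV n k, IsDeg r g mg ∧ mg.2 = i ∧ (∀ m, mg.1 m ≤ α m) ∧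
    ∃ q : R, dh (b - q * (g mg.2).coeff mg.1) < dh b

/-- `f` is reducible by `G` if one of its terms is reducible by `G`. -/
def Red (dh : R → W') (r : AdmissibleOrder n k) (G : Set (PolyVec R n k))
    (f : PolyVec R n k) : Prop :=
  ∃ (α : Fin n →₀ ℕ) (i : Fin k), (f i).coeff α ≠ 0 ∧ TermRed dh r G ((f i).coeff α) α i

/-- `p` is normalized: `p ≠ 0` and `δ̂(Lc p) ≤ δ̂(u · Lc p)` for every unit `u`. -/
def Normalized (dh : R → W') (r : AdmissibleOrder n k) (p : PolyVec R n k) : Prop :=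
  p ≠ 0 ∧ ∃ mp : MonV n k, IsDeg r p mp ∧
    ∀ u : R, IsUnit u → dh ((p mp.2).coeff mp.1) ≤ dh (u * (p mp.2).coeff mp.1)

/-- `G` is a reduced strong Gröbner basis of `I`. -/
def IsRedSGB (dh : R → W') (r : AdmissibleOrder n k) (G : Set (PolyVec R n k))
    (I : Submodule (MvPolynomial (Fin n) R) (PolyVec R n k)) : Prop :=
  IsSGB r G I ∧ ∀ g ∈ G, Normalized dh r g ∧ ¬ Red dh r (G \ {g}) g

end Reduction

section Sixteen

variable {R : Type*} [CommRing R] {n : ℕ}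

/-- An admissible order on the monomials of `R[x₁,…,x_n]` (exponent vectors). -/
structure AdmOrd1 (n : ℕ) where
  le : (Fin n →₀ ℕ) → (Fin n →₀ ℕ) → Prop
  refl : ∀ a, le a a
  trans : ∀ a b c, le a b → le b c → le a c
  antisymm : ∀ a b, le a b → le b a → a = b
  total : ∀ a b, le a b ∨ le b a
  dvd_le : ∀ a b, (∀ m, a m ≤ b m) → le a b
  add_le : ∀ a b c, le a b → le (a + c) (b + c)

/-- `β` is the leading monomial of the polynomial `p` w.r.t. the monomial order `o`. -/
def IsDeg1 (o : AdmOrd1 n) (p : MvPolynomial (Fin n) R) (β : Fin n →₀ ℕ) : Prop :=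
  p.coeff β ≠ 0 ∧ ∀ β', p.coeff β' ≠ 0 → o.le β' β

/-- The leading term of `g` divides the leading term of `p` (single polynomials). -/
def LtDvd1 (o : AdmOrd1 n) (g p : MvPolynomial (Fin n) R) : Prop :=
  ∃ βg βp, IsDeg1 o g βg ∧ IsDeg1 o p βp ∧ (∀ m, βg m ≤ βp m) ∧
    g.coeff βg ∣ p.coeff βp

/-- `S` is a strong Gröbner basis of the ideal (given as a set) `F` w.r.t. `o`. -/
def IsSGB1 (o : AdmOrd1 n) (S F : Set (MvPolynomial (Fin n) R)) : Prop :=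
  (∀ q ∈ S, q ∈ F ∧ q ≠ 0) ∧ ∀ p ∈ F, p ≠ 0 → ∃ g ∈ S, LtDvd1 o g p

end Sixteen

/-- **fork ideals.** Let the rows of `H` be a reduced strong Gröbner
basis of the row module of `A` with respect to the position-over-term order built
from admissible monomial orders `≤₁,…,≤_s`.  Then for each `i`, the `i`-th step
`S_i` of `H` is a strong Gröbner basis of the `i`-th fork ideal `F_i` of `row(A)`
with respect to `≤ᵢ`. -/
theorem step_isSGB_of_fork_ideal
    {R : Type*} [CommRing R] [IsDomain R] {n : ℕ}
    {W : Type*} [LinearOrder W] [WellFoundedLT W]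
    {W' : Type*} [LinearOrder W'] [WellFoundedLT W']
    (δ : R → W)
    (hzero : ∀ a : R, δ 0 ≤ δ a)
    (hmul : ∀ a b : R, a ≠ 0 → δ b ≤ δ (a * b))
    (hdiv : ∀ a b : R, a ≠ 0 → ∃ q s : R, b = q * a + s ∧ δ s < δ a)
    (dh : R → W') (hinj : Function.Injective dh)
    (dh0 : ∀ a : R, dh 0 ≤ dh a)
    (hmono : ∀ a b : R, δ a < δ b → dh a < dh b)
    {r' r s : ℕ}
    (A : Matrix (Fin r') (Fin s) (MvPolynomial (Fin n) R))
    (H : Matrix (Fin r) (Fin s) (MvPolynomial (Fin n) R))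
    (ro : Fin s → AdmOrd1 n)
    (ord : AdmissibleOrder n s)
    -- `ord` is the position-over-term order built from `≤₁,…,≤_s`
    (hord : ∀ (α β : Fin n →₀ ℕ) (i j : Fin s),
      ord.le (α, i) (β, j) ↔ (j < i ∨ (i = j ∧ (ro i).le α β)))
    -- the rows of `H` form a reduced strong Gröbner basis of `row(A)`
    (hH : IsRedSGB dh ord (Set.range fun t => (H t : PolyVec R n s))
      (Submodule.span (MvPolynomial (Fin n) R)
        (Set.range fun t => (A t : PolyVec R n s))))
    (i : Fin s) :
    IsSGB1 (ro i)
      -- the `i`-th step `S_i` of `H`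
      {p | ∃ t : Fin r, H t i = p ∧ H t i ≠ 0 ∧ ∀ i' : Fin s, i' < i → H t i' = 0}
      -- the `i`-th fork ideal `F_i` of `row(A)`
      {p | ∃ v ∈ Submodule.span (MvPolynomial (Fin n) R)
            (Set.range fun t => (A t : PolyVec R n s)),
          v i = p ∧ ∀ i' : Fin s, i' < i → v i' = 0} := by
  obtain ⟨⟨hmem, hgb⟩, -⟩ := hH
  constructor
  · rintro q ⟨t, rfl, hq0, hltz⟩
    exact ⟨⟨H t, (hmem _ ⟨t, rfl⟩).1, rfl, hltz⟩, hq0⟩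
  · rintro p ⟨v, hv, rfl, hvlt⟩ hp0
    have hvne : v ≠ 0 := fun h => hp0 (by simp [h])
    obtain ⟨g, ⟨t, rfl⟩, mg, mf, hg, hf, hpos, hexp, hdvd'⟩ := hgb v hv hvne
    have hmf2 : mf.2 = i := by
      rcases lt_trichotomy mf.2 i with h | h | h
      · exact absurd (hvlt _ h ▸ hf.1) (by simp)
      · exact h
      · obtain ⟨β, hβ⟩ := MvPolynomial.ne_zero_iff.mp hp0
        have h2 := (hord β mf.1 i mf.2).mp (hf.2 (β, i) hβ)
        rcases h2 with h' | ⟨h', -⟩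
        · exact absurd h' (not_lt.mpr h.le)
        · exact absurd h' h.ne
    have hmg2 : mg.2 = i := hpos.trans hmf2
    refine ⟨H t i, ⟨t, rfl, ?_, ?_⟩, ?_⟩
    · exact fun h => (hmg2 ▸ hg.1) (by simp [h])
    · intro i' hi'
      ext β
      by_contra hc
      have h2 := (hord β mg.1 i' mg.2).mp (hg.2 (β, i') hc)
      rw [hmg2] at h2
      rcases h2 with h' | ⟨h', -⟩
      · exact absurd h' (not_lt.mpr hi'.le)
      · exact absurd h' hi'.ne
    · refine ⟨mg.1, mf.1, ⟨hmg2 ▸ hg.1, ?_⟩, ⟨hmf2 ▸ hf.1, ?_⟩, hexp, ?_⟩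
      · intro β' hβ'
        have h2 := (hord β' mg.1 i mg.2).mp (hg.2 (β', i) (hmg2 ▸ hβ'))
        rw [hmg2] at h2
        rcases h2 with h' | ⟨-, h'⟩
        · exact absurd h' (lt_irrefl i)
        · exact h'
      · intro β' hβ'
        have h2 := (hord β' mf.1 i mf.2).mp (hf.2 (β', i) hβ')
        rw [hmf2] at h2
        rcases h2 with h' | ⟨-, h'⟩
        · exact absurd h' (lt_irrefl i)
        · exact h'
      · simpa only [hmg2, hmf2] using hdvd'
end

section
/- Let R be a Euclidean domain, A ∈ R[x]^{r×s}, b ∈ R[x]^r, and let a₁,…,a_s be the columns of A. Consider the R[x]-submodule M of R[x]^{r+s+1} generated by the rows of the block matrix A' = [(−bᵀ; Aᵀ) | I_{s+1}]. Then the (r+1)-th fork ideal F_{r+1} := {p ∈ R[x] : ∃ p_{r+2},…,p_{r+s+1} with (0,…,0,p,p_{r+2},…,p_{r+s+1}) ∈ M} equals the quotient ideal (col(A) : b) := {p ∈ R[x] : p·b ∈ col(A)}, where col(A) := {A x : x ∈ R[x]^s}. -/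
open MvPolynomial

/-- The rows of the block matrix `A' = [(−bᵀ; Aᵀ) | I_{s+1}]`, with columns indexed by
`Fin r ⊕ Fin (s+1)`: the row with index `0` is `(−bᵀ, e₀)` and the row with index
`t+1` is `(t-th row of Aᵀ, e_{t+1})`. -/
noncomputable def rowsAux {R : Type*} [CommRing R] {n r s : ℕ}
    (A : Matrix (Fin r) (Fin s) (MvPolynomial (Fin n) R))
    (b : Fin r → MvPolynomial (Fin n) R) :
    Fin (s + 1) → (Fin r ⊕ Fin (s + 1)) → MvPolynomial (Fin n) R :=
  fun t => Sum.elim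
    (fun j => Fin.cases (-(b j)) (fun t' => A j t') t)
    (fun j => if j = t then 1 else 0)

/-- For a Euclidean domain `R`, `A ∈ R[x]^{r×s}` and `b ∈ R[x]^r`,
the `(r+1)`-th fork ideal of the row module `M` of `A' = [(−bᵀ; Aᵀ) | I_{s+1}]`
equals the quotient ideal `(col(A) : b) = {p : p·b ∈ col(A)}`. -/
theorem fork_ideal_eq_quotient_ideal
    {R : Type*} [CommRing R] [IsDomain R] {n r s : ℕ}
    (A : Matrix (Fin r) (Fin s) (MvPolynomial (Fin n) R))
    (b : Fin r → MvPolynomial (Fin n) R) :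
    {p : MvPolynomial (Fin n) R |
      ∃ v ∈ Submodule.span (MvPolynomial (Fin n) R) (Set.range (rowsAux A b)),
        (∀ j : Fin r, v (Sum.inl j) = 0) ∧ v (Sum.inr 0) = p} =
    {p : MvPolynomial (Fin n) R |
      ∃ x : Fin s → MvPolynomial (Fin n) R, A.mulVec x = p • b} := by
  ext p
  simp only [Set.mem_setOf_eq]
  constructor
  · rintro ⟨v, hv, hz, hp⟩
    rw [Submodule.mem_span_range_iff_exists_fun] at hv
    obtain ⟨c, hc⟩ := hv
    refine ⟨fun t => c t.succ, ?_⟩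
    funext j
    have h1 := hz j
    have h2 := hp
    rw [← hc] at h1 h2
    simp only [Finset.sum_apply, Pi.smul_apply, smul_eq_mul, rowsAux, Sum.elim_inl,
      Sum.elim_inr, mul_ite, mul_one, mul_zero, Finset.sum_ite_eq, Finset.mem_univ,
      if_true, Fin.sum_univ_succ, Fin.cases_zero, Fin.cases_succ] at h1 h2
    simp only [Matrix.mulVec, dotProduct, Pi.smul_apply, smul_eq_mul]
    subst h2
    linear_combination h1 + Finset.sum_congr rfl (fun i _ => mul_comm (A j i) (c i.succ))
  · rintro ⟨x, hx⟩
    refine ⟨∑ t, (Fin.cases p x t : MvPolynomial (Fin n) R) • rowsAux A b t, ?_, ?_, ?_⟩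
    · exact Submodule.sum_mem _ fun t _ =>
        Submodule.smul_mem _ _ (Submodule.subset_span ⟨t, rfl⟩)
    · intro j
      have := congrFun hx j
      simp only [Matrix.mulVec, dotProduct, Pi.smul_apply, smul_eq_mul] at this
      simp only [Finset.sum_apply, Pi.smul_apply, smul_eq_mul, rowsAux, Sum.elim_inl,
        Fin.sum_univ_succ, Fin.cases_zero, Fin.cases_succ]
      linear_combination this + Finset.sum_congr rfl (fun i _ => mul_comm (x i) (A j i))
    · simp [rowsAux, Finset.sum_ite_eq]
end

section
/- Let R be a Euclidean domain, A ∈ R[x]^{r×s}, and let M be the R[x]-submodule of R[x]^{r+s+1} generated by the rows of A' = [(0ᵀ omitted; with first row −bᵀ and remaining rows Aᵀ) | I_{s+1}] for some b ∈ R[x]^r. Then E := {(f₁,…,f_s) ∈ R[x]^s : (0,…,0 (r+1 zeros), f₁,…,f_s) ∈ M} equals ker(A) := {y ∈ R[x]^s : A y = 0}. -/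
open MvPolynomial

/-- With `M` the row module of `A' = [(−bᵀ; Aᵀ) | I_{s+1}]`, the set
`E` of vectors `(f₁,…,f_s)` such that `(0,…,0,f₁,…,f_s)` (with `r+1` zeros) lies in
`M` equals `ker(A) = {y : A·y = 0}`. -/
theorem fork_module_eq_kernel
    {R : Type*} [CommRing R] [IsDomain R] {n r s : ℕ}
    (A : Matrix (Fin r) (Fin s) (MvPolynomial (Fin n) R))
    (b : Fin r → MvPolynomial (Fin n) R) :
    {y : Fin s → MvPolynomial (Fin n) R |
      ∃ v ∈ Submodule.span (MvPolynomial (Fin n) R) (Set.range (rowsAux A b)),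
        (∀ j : Fin r, v (Sum.inl j) = 0) ∧ v (Sum.inr 0) = 0 ∧
        ∀ i : Fin s, v (Sum.inr i.succ) = y i} =
    {y : Fin s → MvPolynomial (Fin n) R | A.mulVec y = 0} := by
  ext y
  simp only [Set.mem_setOf_eq]
  constructor
  · rintro ⟨v, hv, h1, h2, h3⟩
    rw [Submodule.mem_span_range_iff_exists_fun] at hv
    obtain ⟨c, hc⟩ := hv
    have hcoord : ∀ t, v (Sum.inr t) = c t := by
      intro t
      rw [← hc]
      simp [rowsAux, Finset.sum_apply, Pi.smul_apply]
    have hc0 : c 0 = 0 := by rw [← hcoord]; exact h2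
    have hcs : ∀ i, c i.succ = y i := by intro i; rw [← hcoord]; exact h3 i
    funext j
    have h := h1 j
    rw [← hc] at h
    simp only [Finset.sum_apply, Pi.smul_apply, rowsAux, Sum.elim_inl, smul_eq_mul,
      Fin.sum_univ_succ, Fin.cases_zero, Fin.cases_succ, hc0, zero_mul, zero_add] at h
    simpa [Matrix.mulVec, dotProduct, Pi.zero_apply, hcs, mul_comm] using h
  · intro hy
    refine ⟨∑ i : Fin s, y i • rowsAux A b i.succ, ?_, ?_, ?_, ?_⟩
    · exact Submodule.sum_mem _ fun i _ =>
        Submodule.smul_mem _ _ (Submodule.subset_span ⟨i.succ, rfl⟩)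
    · intro j
      have := congrFun hy j
      simp only [Finset.sum_apply, Pi.smul_apply, rowsAux, Sum.elim_inl, smul_eq_mul,
        Fin.cases_succ]
      simpa [Matrix.mulVec, dotProduct, mul_comm] using this
    · simp [rowsAux, Finset.sum_apply, Fin.succ_ne_zero, eq_comm]
    · intro i
      simp [rowsAux, Finset.sum_apply, Fin.succ_inj]
end
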